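/- Let k > 0, α' ∈ (−π, 0), d ∈ ℝ and (x, y) ∈ ℝ². Then the function F(R) = ∫_{−π}^0 (cos(θ−α') − 1)·exp(−ik(d sin θ + x cos θ + y sin θ))·exp(ikR cos(θ−α')) dθ satisfies F(R) = O(R^{−1}) as R → ∞. -/

import Mathlib

/-! Because the amplitude vanishes to second order at the stationary point `θ = α'`, the
half-angle identity `cos s - 1 = -tan (s / 2) * sin s` writes it as `u θ * φ' θ` with
`φ θ = k cos (θ - α')` and `u` smooth on `[-π, 0]` (there `|θ - α'| < π`, so the tangent has no
pole). Then `u φ' e^{iRφ} = (iR)⁻¹ u (e^{iRφ})'`, and one integration by parts bounds the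
integral by `R⁻¹` times `‖u (-π)‖ + ‖u 0‖ + ∫ ‖u'‖`. -/

open scoped Real
open Complex Filter Set Asymptotics intervalIntegral MeasureTheory

theorem ContDiffAt.continuousAt_deriv {𝕜 F : Type*} [NontriviallyNormedField 𝕜]
    [NormedAddCommGroup F] [NormedSpace 𝕜 F] {f : 𝕜 → F} {x : 𝕜} {n : WithTop ℕ∞}
    (hf : ContDiffAt 𝕜 n f x) (hn : n ≠ 0) : ContinuousAt (deriv f) x :=
  (hf.continuousAt_fderiv hn).clm_apply continuousAt_const

theorem Real.tan_half_mul_sin {x : ℝ} (hx : Real.cos (x / 2) ≠ 0) :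
    Real.tan (x / 2) * Real.sin x = 1 - Real.cos x := by
  have hx2 : x = 2 * (x / 2) := by ring
  rw [Real.tan_eq_sin_div_cos, hx2, Real.sin_two_mul, Real.cos_two_mul, ← hx2]
  field_simp
  linear_combination 2 * Real.sin_sq_add_cos_sq (x / 2)

section Oscillatory

variable {a b : ℝ} {u : ℝ → ℂ} {φ : ℝ → ℝ}

theorem intervalIntegrable_deriv_of_contDiffAt {E : Type*} [NormedAddCommGroup E]
    [NormedSpace ℝ E] {f : ℝ → E}
    (hf : ∀ t ∈ uIcc a b, ContDiffAt ℝ 1 f t) : IntervalIntegrable (deriv f) volume a b :=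
  ContinuousOn.intervalIntegrable fun t ht =>
    ((hf t ht).continuousAt_deriv one_ne_zero).continuousWithinAt

theorem norm_integral_mul_deriv_exp_le (hu : ∀ t ∈ uIcc a b, ContDiffAt ℝ 1 u t)
    (hφ : ∀ t ∈ uIcc a b, ContDiffAt ℝ 1 φ t) :
    ‖∫ t in a..b, u t * (exp (φ t * I) * (deriv φ t * I))‖ ≤
      ‖u b‖ + ‖u a‖ + |∫ t in a..b, ‖deriv u t‖| := by
  have hv : ∀ t ∈ uIcc a b,
      HasDerivAt (fun t => exp (φ t * I)) (exp (φ t * I) * (deriv φ t * I)) t := fun t ht =>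
    (((hφ t ht).differentiableAt one_ne_zero).hasDerivAt.ofReal_comp.mul_const I).cexp
  have hv' : IntervalIntegrable (fun t => exp (φ t * I) * (deriv φ t * I)) volume a b := by
    refine ContinuousOn.intervalIntegrable fun t ht => ContinuousAt.continuousWithinAt ?_
    have h1 := (hφ t ht).continuousAt
    have h2 := (hφ t ht).continuousAt_deriv one_ne_zero
    fun_prop
  rw [integral_mul_deriv_eq_deriv_mul
    (fun t ht => ((hu t ht).differentiableAt one_ne_zero).hasDerivAt) hv
    (intervalIntegrable_deriv_of_contDiffAt hu) hv']
  have hnorm : ∀ t, ‖deriv u t * exp (φ t * I)‖ = ‖deriv u t‖ := fun t => by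
    rw [norm_mul, norm_exp_ofReal_mul_I, mul_one]
  calc _ ≤ ‖u b * exp (φ b * I)‖ + ‖u a * exp (φ a * I)‖
        + ‖∫ t in a..b, deriv u t * exp (φ t * I)‖ := by
        grw [norm_sub_le, norm_sub_le]
    _ ≤ ‖u b‖ + ‖u a‖ + |∫ t in a..b, ‖deriv u t‖| := by
      grw [norm_integral_le_abs_integral_norm]
      simp only [hnorm, norm_mul, norm_exp_ofReal_mul_I, mul_one, le_refl]

theorem integral_mul_deriv_mul_exp_isBigO_inv (hu : ∀ t ∈ uIcc a b, ContDiffAt ℝ 1 u t)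
    (hφ : ∀ t ∈ uIcc a b, ContDiffAt ℝ 1 φ t) :
    (fun R : ℝ => ∫ t in a..b, u t * deriv φ t * exp ((R * φ t : ℝ) * I))
      =O[atTop] fun R => R⁻¹ := by
  refine IsBigO.of_bound (‖u b‖ + ‖u a‖ + |∫ t in a..b, ‖deriv u t‖|) ?_
  filter_upwards [eventually_gt_atTop 0] with R hR
  have hRφ : ∀ t ∈ uIcc a b, ContDiffAt ℝ 1 (fun t => R * φ t) t :=
    fun t ht => contDiffAt_const.mul (hφ t ht)
  have hscale : ∫ t in a..b, u t * deriv φ t * exp ((R * φ t : ℝ) * I) =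
      ((R : ℂ)⁻¹ * -I) * ∫ t in a..b,
        u t * (exp ((R * φ t : ℝ) * I) * (deriv (fun t => R * φ t) t * I)) := by
    rw [← intervalIntegral.integral_const_mul]
    refine integral_congr fun t _ => ?_
    have hR₀ : (R : ℂ) ≠ 0 := ofReal_ne_zero.2 hR.ne'
    simp only [deriv_const_mul_field']
    push_cast
    field_simp
    linear_combination (u t * ((deriv φ t : ℝ) : ℂ)) * I_sq
  have hnorm : ‖(R : ℂ)⁻¹ * -I‖ = ‖R⁻¹‖ := by simp
  rw [hscale, norm_mul, hnorm, mul_comm]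
  exact mul_le_mul_of_nonneg_right (norm_integral_mul_deriv_exp_le hu hRφ) (norm_nonneg _)

end Oscillatory

/-- Integration-by-parts estimate for the transmitted down-going wave over the lower
semicircle (refracted angle `α' ∈ (-π, 0)`):
`F(R) = ∫_{-π}^0 (cos(θ-α') - 1) e^{-ik(d sin θ + x cos θ + y sin θ)} e^{ikR cos(θ-α')} dθ`
is `O(R⁻¹)` as `R → ∞`. -/
theorem stmt12 (k α' d x y : ℝ) (hk : 0 < k) (hα' : α' ∈ Set.Ioo (-π) 0) :
    (fun R : ℝ => ∫ θ in (-π : ℝ)..0,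
        ((Real.cos (θ - α') - 1 : ℝ) : ℂ) *
          Complex.exp (-Complex.I * (k : ℂ) *
            ((d * Real.sin θ + x * Real.cos θ + y * Real.sin θ : ℝ) : ℂ)) *
          Complex.exp (Complex.I * (k : ℂ) * (R : ℂ) * ((Real.cos (θ - α') : ℝ) : ℂ)))
      =O[Filter.atTop] fun R : ℝ => R⁻¹ := by
  set g : ℝ → ℂ := fun θ =>
    exp (-I * k * ((d * Real.sin θ + x * Real.cos θ + y * Real.sin θ : ℝ) : ℂ))
  set φ : ℝ → ℝ := fun θ => k * Real.cos (θ - α')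
  set u : ℝ → ℂ := fun θ => ((Real.tan ((θ - α') / 2) / k : ℝ) : ℂ) * g θ
  have hg : ContDiff ℝ 1 g := contDiff_exp.comp <| contDiff_const.mul <|
    ofRealCLM.contDiff.comp (f := fun θ => d * Real.sin θ + x * Real.cos θ + y * Real.sin θ)
      (by fun_prop)
  have hcos : ∀ θ ∈ uIcc (-π) 0, Real.cos ((θ - α') / 2) ≠ 0 := by
    intro θ hθ
    rw [uIcc_of_le (by linarith [Real.pi_pos])] at hθ
    exact (Real.cos_pos_of_mem_Ioo ⟨by linarith [hθ.1, hα'.2], by linarith [hθ.2, hα'.1]⟩).ne'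
  have hu : ∀ θ ∈ uIcc (-π) 0, ContDiffAt ℝ 1 u θ := by
    intro θ hθ
    have htan : ContDiffAt ℝ 1 (fun θ => Real.tan ((θ - α') / 2)) θ :=
      (Real.contDiffAt_tan.2 (hcos θ hθ)).comp (f := fun θ => (θ - α') / 2) θ (by fun_prop)
    exact (ofRealCLM.contDiff.contDiffAt.comp θ (htan.div_const k)).mul hg.contDiffAt
  have hφ : ContDiff ℝ 1 φ := by fun_prop
  have hderiv : ∀ θ, deriv φ θ = -(k * Real.sin (θ - α')) := by
    simp [φ]
  refine (integral_mul_deriv_mul_exp_isBigO_inv hu fun θ _ => hφ.contDiffAt).congr'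
    (Eventually.of_forall fun R => integral_congr fun θ hθ => ?_) EventuallyEq.rfl
  have hamp : Real.tan ((θ - α') / 2) / k * -(k * Real.sin (θ - α')) =
      Real.cos (θ - α') - 1 := by
    field_simp
    linarith [Real.tan_half_mul_sin (hcos θ hθ)]
  have hexp : exp ((R * φ θ : ℝ) * I) = exp (I * k * R * (Real.cos (θ - α') : ℂ)) := by
    congr 1
    push_cast [φ]
    ring
  rw [hexp, hderiv, ← hamp, ofReal_mul]
  ring
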